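/- arXiv:math/0412077 — 2 statements merged into one kernel-verified Lean document; each statement's English description precedes it below -/
import Mathlib

section
/- Let M be the full subcategory add{M[i] : i ∈ ℤ} of the bounded derived category D^b(mod H) of a hereditary algebra H, where M is an indecomposable H-module with Ext^1_H(M,M) = 0. Then M is a thick subcategory of D^b(mod H). -/
open CategoryTheory Limits Pretriangulated

/-- `X` lies in `add {M[i] : i ∈ ℤ}`: it is a direct summand of a finite direct
sum of shifts of `M`. -/
def InAddShifts {D : Type} [Category D] [Preadditive D] [HasZeroObject D]
    [HasShift D ℤ] [HasFiniteBiproducts D] [HasBinaryBiproducts D] (M X : D) : Prop :=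
  ∃ (n : ℕ) (k : Fin n → ℤ) (Y : D),
    Nonempty ((X ⊞ Y) ≅ (⨁ fun i : Fin n => M⟦k i⟧))

namespace AddShiftsAux

variable {D : Type} [Category D] [Preadditive D]
    [HasZeroObject D] [HasShift D ℤ] [∀ i : ℤ, (shiftFunctor D i).Additive]
    [Pretriangulated D] [HasFiniteBiproducts D] [HasBinaryBiproducts D]

/-- `X` is (isomorphic to) a finite direct sum of shifts of `M`. -/
inductive SS (M : D) : D → Prop
  | of_isZero (X : D) (h : IsZero X) : SS M X
  | cons (k : ℤ) (X Y : D) (hY : SS M Y) (e : Nonempty (X ≅ M⟦k⟧ ⊞ Y)) : SS M X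

variable {M : D}

instance (i : ℤ) : PreservesBinaryBiproducts (shiftFunctor D i) :=
  preservesBinaryBiproducts_of_preservesBiproducts _

lemma SS.of_iso {X Y : D} (h : SS M Y) (e : X ≅ Y) : SS M X := by
  induction h with
  | of_isZero Z hZ => exact SS.of_isZero _ (hZ.of_iso e)
  | cons k Z W hW e' _ => exact SS.cons k _ W hW ⟨e ≪≫ e'.some⟩

/-- absorb a zero object into a biproduct -/
noncomputable def zeroBiprodIso {Z X : D} (hZ : IsZero Z) : Z ⊞ X ≅ X where
  hom := biprod.snd
  inv := biprod.lift 0 (𝟙 X)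
  hom_inv_id := by
    apply biprod.hom_ext'
    · apply hZ.eq_of_src
    · apply biprod.hom_ext <;> simp
  inv_hom_id := by simp

lemma SS.biprod {X Y : D} (hX : SS M X) (hY : SS M Y) : SS M (X ⊞ Y) := by
  induction hX with
  | of_isZero Z hZ => exact hY.of_iso (zeroBiprodIso hZ)
  | cons k Z W hW e ih =>
      exact SS.cons k _ (W ⊞ Y) ih
        ⟨biprod.mapIso e.some (Iso.refl Y) ≪≫ biprod.associator _ _ _⟩

lemma SS.shift {X : D} (hX : SS M X) (i : ℤ) : SS M (X⟦i⟧) := by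
  induction hX with
  | of_isZero Z hZ => exact SS.of_isZero _ ((shiftFunctor D i).map_isZero hZ)
  | cons k Z W hW e ih =>
      refine SS.cons (k + i) _ (W⟦i⟧) ih ?_
      refine ⟨(shiftFunctor D i).mapIso e.some ≪≫
        (shiftFunctor D i).mapBiprod _ _ ≪≫
        biprod.mapIso (((shiftFunctorAdd' D k i (k + i) rfl).symm).app M) (Iso.refl _)⟩

lemma isZero_biproduct_fin_zero (f : Fin 0 → D) : IsZero (⨁ f) := by
  rw [IsZero.iff_id_eq_zero]
  apply biproduct.hom_ext
  intro j
  exact j.elim0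

/-- Peeling off the first summand of a biproduct over `Fin (n+1)`. -/
noncomputable def biproductFinSucc {n : ℕ} (f : Fin (n + 1) → D) :
    (⨁ f) ≅ f 0 ⊞ ⨁ (fun i : Fin n => f i.succ) where
  hom := biprod.lift (biproduct.π f 0) (biproduct.lift fun i => biproduct.π f i.succ)
  inv := biprod.desc (biproduct.ι f 0) (biproduct.desc fun i => biproduct.ι f i.succ)
  hom_inv_id := by
    apply biproduct.hom_ext'
    intro j
    induction j using Fin.cases with
    | zero =>
        simp only [Category.comp_id, Preadditive.comp_add, biprod.lift_desc,
          ← Category.assoc, biproduct.ι_π_self, biproduct.lift_π]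
        rw [show (biproduct.ι f 0 ≫ biproduct.lift fun i : Fin n => biproduct.π f i.succ) = 0 by
          apply biproduct.hom_ext
          intro j
          simp only [Category.assoc, biproduct.lift_π, zero_comp]
          exact biproduct.ι_π_ne _ (Fin.succ_ne_zero j).symm]
        simp
    | succ i =>
        rw [biprod.lift_desc]
        have h1 : biproduct.ι f i.succ ≫ biproduct.π f 0 = 0 :=
          biproduct.ι_π_ne _ (Fin.succ_ne_zero i)
        have h2 : (biproduct.ι f i.succ ≫ biproduct.lift fun i' : Fin n => biproduct.π f i'.succ) ≫
            biproduct.desc (fun i' : Fin n => biproduct.ι f i'.succ) = biproduct.ι f i.succ := by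
          rw [Category.assoc, biproduct.lift_desc, Preadditive.comp_sum]
          rw [Finset.sum_eq_single i]
          · simp
          · intro j _ hj
            rw [← Category.assoc, biproduct.ι_π_ne _
              (fun h => hj (Fin.succ_injective _ h).symm), zero_comp]
          · intro h; exact absurd (Finset.mem_univ i) h
        simp only [Preadditive.comp_add, Category.comp_id, ← Category.assoc]
        rw [h1, zero_comp, zero_add]
        exact h2
  inv_hom_id := by
    apply biprod.hom_ext'
    · apply biprod.hom_ext
      · simp
      · simp only [Category.assoc, biprod.inl_desc_assoc, biprod.lift_snd,
          biprod.inl_snd, Category.comp_id]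
        apply biproduct.hom_ext
        intro j
        simp only [Category.assoc, biproduct.lift_π, zero_comp]
        exact biproduct.ι_π_ne _ (Fin.succ_ne_zero j).symm
    · apply biprod.hom_ext
      · simp only [Category.assoc, biprod.inr_desc_assoc, biprod.lift_fst,
          biprod.inr_fst, Category.comp_id]
        apply biproduct.hom_ext'
        intro j
        simp only [biproduct.ι_desc_assoc, comp_zero]
        exact biproduct.ι_π_ne _ (Fin.succ_ne_zero j)
      · simp only [Category.assoc, biprod.inr_desc_assoc, biprod.lift_snd,
          biprod.inr_snd, Category.comp_id]
        apply biproduct.hom_ext'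
        intro j
        apply biproduct.hom_ext
        intro i
        simp [biproduct.ι_π, Fin.succ_inj]

/-- Conversion: finite biproducts of shifts are `SS`. -/
lemma SS_finBiproduct (n : ℕ) (k : Fin n → ℤ) :
    SS M (⨁ fun i : Fin n => M⟦k i⟧) := by
  induction n with
  | zero => exact SS.of_isZero _ (isZero_biproduct_fin_zero _)
  | succ m ih =>
      exact SS.cons (k 0) _ (⨁ fun i : Fin m => M⟦k i.succ⟧) (ih _)
        ⟨biproductFinSucc _⟩

/-- Conversion: `SS` objects are finite biproducts of shifts. -/
lemma SS.exists_iso {X : D} (hX : SS M X) :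
    ∃ (n : ℕ) (k : Fin n → ℤ), Nonempty (X ≅ ⨁ fun i : Fin n => M⟦k i⟧) := by
  induction hX with
  | of_isZero Z hZ =>
      exact ⟨0, fun i => 0, ⟨hZ.iso (isZero_biproduct_fin_zero _)⟩⟩
  | cons k Z W hW e ih =>
      obtain ⟨n, k', ⟨e'⟩⟩ := ih
      refine ⟨n + 1, Fin.cons k k', ⟨e.some ≪≫ biprod.mapIso (Iso.refl _) e' ≪≫
        ?_ ≪≫ (biproductFinSucc _).symm⟩⟩
      exact biprod.mapIso (eqToIso (by rw [Fin.cons_zero]))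
        (biproduct.mapIso fun i => eqToIso (by rw [Fin.cons_succ]))

/-- The product over `Bool` as a binary biproduct. -/
noncomputable def prodBoolIso (f : Bool → D) : (∏ᶜ f) ≅ f false ⊞ f true where
  hom := biprod.lift (Pi.π f false) (Pi.π f true)
  inv := Pi.lift (fun b => Bool.rec biprod.fst biprod.snd b)
  hom_inv_id := by
    apply limit.hom_ext
    rintro ⟨(_ | _)⟩ <;> simp
  inv_hom_id := by
    apply biprod.hom_ext <;> simp

/-- binary product of triangles, with its identifications -/
lemma exists_sum_triangle (T₁ T₂ : Triangle D) (hT₁ : T₁ ∈ distTriang D)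
    (hT₂ : T₂ ∈ distTriang D) :
    ∃ (T : Triangle D) (_ : T ∈ distTriang D)
      (e₁ : T.obj₁ ≅ T₁.obj₁ ⊞ T₂.obj₁) (e₂ : T.obj₂ ≅ T₁.obj₂ ⊞ T₂.obj₂)
      (_ : T.obj₃ ≅ T₁.obj₃ ⊞ T₂.obj₃),
      T.mor₁ ≫ e₂.hom = e₁.hom ≫ biprod.map T₁.mor₁ T₂.mor₁ := by
  classical
  let P : Bool → Triangle D := fun b => bif b then T₂ else T₁
  have hP : ∀ b, P b ∈ distTriang D := by rintro (_ | _); exacts [hT₁, hT₂]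
  refine ⟨productTriangle P, productTriangle_distinguished P hP,
    prodBoolIso _, prodBoolIso _, prodBoolIso _, ?_⟩
  apply biprod.hom_ext
  · show (Limits.Pi.map (fun j => (P j).mor₁) ≫ biprod.lift (Pi.π (fun j => (P j).obj₂) false)
      (Pi.π (fun j => (P j).obj₂) true)) ≫ biprod.fst = (biprod.lift (Pi.π (fun j => (P j).obj₁) false)
      (Pi.π (fun j => (P j).obj₁) true) ≫ biprod.map (P false).mor₁ (P true).mor₁) ≫ biprod.fst
    simp [Pi.map_π]
  · show (Limits.Pi.map (fun j => (P j).mor₁) ≫ biprod.lift (Pi.π (fun j => (P j).obj₂) false)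
      (Pi.π (fun j => (P j).obj₂) true)) ≫ biprod.snd = (biprod.lift (Pi.π (fun j => (P j).obj₁) false)
      (Pi.π (fun j => (P j).obj₁) true) ≫ biprod.map (P false).mor₁ (P true).mor₁) ≫ biprod.snd
    simp [Pi.map_π]

/-- cone uniqueness -/
lemma cone_iso (T T' : Triangle D) (hT : T ∈ distTriang D) (hT' : T' ∈ distTriang D)
    (e₁ : T.obj₁ ≅ T'.obj₁) (e₂ : T.obj₂ ≅ T'.obj₂)
    (comm : T.mor₁ ≫ e₂.hom = e₁.hom ≫ T'.mor₁) :
    Nonempty (T.obj₃ ≅ T'.obj₃) :=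
  ⟨Triangle.π₃.mapIso (isoTriangleOfIso₁₂ T T' hT hT' e₁ e₂ comm)⟩

/-- a retract is a direct summand -/
lemma retract_split {Y W : D} (s : Y ⟶ W) (r : W ⟶ Y) (hsr : s ≫ r = 𝟙 Y) :
    ∃ C : D, Nonempty (W ≅ Y ⊞ C) := by
  obtain ⟨C, g, h, mem⟩ := distinguished_cocone_triangle s
  have hrot := rot_of_distTriang _ mem
  have hzero : h ≫ s⟦(1 : ℤ)⟧' = 0 := by
    exact comp_distTriang_mor_zero₃₁ _ mem
  have h0 : h = 0 := by
    have : h ≫ s⟦(1 : ℤ)⟧' ≫ r⟦(1 : ℤ)⟧' = h := by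
      rw [← (shiftFunctor D (1 : ℤ)).map_comp, hsr, (shiftFunctor D (1 : ℤ)).map_id,
        Category.comp_id]
    rw [← this, ← Category.assoc, hzero, zero_comp]
  obtain ⟨e, he₁, he₂⟩ := exists_iso_binaryBiproduct_of_distTriang _ mem h0
  exact ⟨C, ⟨e⟩⟩

/-- classification of maps between shifts of `M` -/
lemma hom_shift_cases (horth : ∀ i : ℤ, i ≠ 0 → ∀ f : M ⟶ M⟦i⟧, f = 0)
    (hend : ∀ f : M ⟶ M, f = 0 ∨ IsIso f)
    {a b : ℤ} (f : M⟦a⟧ ⟶ M⟦b⟧) : f = 0 ∨ IsIso f := by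
  by_cases hab : a = b
  · subst hab
    obtain ⟨u, rfl⟩ : ∃ u : M ⟶ M, (shiftFunctor D a).map u = f :=
      ⟨(shiftFunctor D a).preimage f, (shiftFunctor D a).map_preimage f⟩
    rcases hend u with h | h
    · left; rw [h, Functor.map_zero]
    · right; infer_instance
  · left
    -- transport `f` to a morphism `M ⟶ M⟦b - a⟧` and use orthogonality
    have h1 : (shiftFunctor D (-a)).map f =
        ((shiftEquiv D a).unitIso.app M).inv ≫
          (((shiftEquiv D a).unitIso.app M).hom ≫ (shiftFunctor D (-a)).map f ≫
            ((shiftFunctorAdd' D b (-a) (b - a) (by ring)).app M).inv) ≫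
          ((shiftFunctorAdd' D b (-a) (b - a) (by ring)).app M).hom := by
      simp
      exact ((Category.assoc (obj := D) _ _ _).trans (by rw [Iso.inv_hom_id_app]; exact (Category.comp_id _))).symm
    have h2 : ((shiftEquiv D a).unitIso.app M).hom ≫ (shiftFunctor D (-a)).map f ≫
        ((shiftFunctorAdd' D b (-a) (b - a) (by ring)).app M).inv = 0 :=
      horth (b - a) (by omega) _
    have h3 : (shiftFunctor D (-a)).map f = 0 := by
      rw [h1, h2, zero_comp, comp_zero]; rfl
    apply (shiftFunctor D (-a)).map_injective
    rw [h3, Functor.map_zero]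

/-- The twist isomorphism `P ⊞ (Q ⊞ R) ≅ Q ⊞ (P ⊞ R)`. -/
noncomputable def twistIso (P Q R : D) : P ⊞ (Q ⊞ R) ≅ Q ⊞ (P ⊞ R) where
  hom := biprod.lift (biprod.snd ≫ biprod.fst)
    (biprod.lift biprod.fst (biprod.snd ≫ biprod.snd))
  inv := biprod.lift (biprod.snd ≫ biprod.fst)
    (biprod.lift biprod.fst (biprod.snd ≫ biprod.snd))
  hom_inv_id := by ext <;> simp
  inv_hom_id := by ext <;> simp

/-- The interchange isomorphism for biproducts. -/
noncomputable def interchangeIso (A B C E : D) : (A ⊞ B) ⊞ (C ⊞ E) ≅ (A ⊞ C) ⊞ (B ⊞ E) where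
  hom := biprod.lift (biprod.lift (biprod.fst ≫ biprod.fst) (biprod.snd ≫ biprod.fst))
    (biprod.lift (biprod.fst ≫ biprod.snd) (biprod.snd ≫ biprod.snd))
  inv := biprod.lift (biprod.lift (biprod.fst ≫ biprod.fst) (biprod.snd ≫ biprod.fst))
    (biprod.lift (biprod.fst ≫ biprod.snd) (biprod.snd ≫ biprod.snd))
  hom_inv_id := by ext <;> simp
  inv_hom_id := by ext <;> simp

/-- Splitting off a summand: a nonzero map `M⟦a⟧ ⟶ B` with `B` a sum of shifts
is a split mono with `SS` complement. -/
lemma split_off (horth : ∀ i : ℤ, i ≠ 0 → ∀ f : M ⟶ M⟦i⟧, f = 0)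
    (hend : ∀ f : M ⟶ M, f = 0 ∨ IsIso f)
    {B : D} (hB : SS M B) :
    ∀ (a : ℤ) (g : M⟦a⟧ ⟶ B),
      g = 0 ∨ ∃ (B' : D) (_ : SS M B') (φ : M⟦a⟧ ⊞ B' ≅ B), biprod.inl ≫ φ.hom = g := by
  induction hB with
  | of_isZero Z hZ =>
      intro a g
      exact Or.inl (hZ.eq_of_tgt _ _)
  | cons k Z Y hY e ih =>
      intro a g
      obtain ⟨ψ⟩ := e
      rcases hom_shift_cases horth hend (g ≫ ψ.hom ≫ biprod.fst) with h | h
      · -- first component vanishes; recurse into `Y`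
        rcases ih a (g ≫ ψ.hom ≫ biprod.snd) with h2 | ⟨Y₃, hY₃, φ₂, hφ₂⟩
        · left
          have hcomp : g ≫ ψ.hom = 0 := by
            apply biprod.hom_ext
            · rw [Category.assoc, h, zero_comp]
            · rw [Category.assoc, h2, zero_comp]
          calc g = (g ≫ ψ.hom) ≫ ψ.inv := by simp
          _ = 0 := by rw [hcomp, zero_comp]
        · right
          refine ⟨M⟦k⟧ ⊞ Y₃, SS.cons k _ Y₃ hY₃ ⟨Iso.refl _⟩,
            twistIso _ _ _ ≪≫ biprod.mapIso (Iso.refl _) φ₂ ≪≫ ψ.symm, ?_⟩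
          rw [← cancel_mono ψ.hom]
          apply biprod.hom_ext
          · simp [twistIso, h]
          · simp only [Iso.trans_hom, Iso.symm_hom, Category.assoc, Iso.inv_hom_id,
              Category.comp_id, twistIso, biprod.mapIso_hom, Iso.refl_hom,
              biprod.map_snd, biprod.lift_snd_assoc]
            rw [← hφ₂]
            have hl : biprod.inl ≫ biprod.lift biprod.fst
                (biprod.snd ≫ (biprod.snd : (shiftFunctor D k).obj M ⊞ Y₃ ⟶ Y₃)) =
                (biprod.inl : (shiftFunctor D a).obj M ⟶ _) := by
              apply biprod.hom_ext <;> simp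
            rw [← Category.assoc, hl]
      · -- first component is an isomorphism; change basis
        right
        obtain ⟨u, hu1, hu2⟩ := h.out
        have hu1' : g ≫ ψ.hom ≫ biprod.fst ≫ u = 𝟙 _ := by
          simpa only [Category.assoc] using hu1
        have hu2' : u ≫ g ≫ ψ.hom ≫ biprod.fst = 𝟙 _ := by
          simpa only [Category.assoc] using hu2
        have key1 := reassoc_of% hu1'
        have key2 := reassoc_of% hu2'
        have : IsIso (biprod.desc (g ≫ ψ.hom) biprod.inr : M⟦a⟧ ⊞ Y ⟶ M⟦k⟧ ⊞ Y) := by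
          refine ⟨⟨biprod.lift (biprod.fst ≫ u)
            (biprod.snd - biprod.fst ≫ u ≫ g ≫ ψ.hom ≫ biprod.snd), ?_, ?_⟩⟩
          · apply biprod.hom_ext'
            · apply biprod.hom_ext <;>
                simp [Preadditive.comp_sub, hu1', key1]
            · apply biprod.hom_ext <;> simp
          · apply biprod.hom_ext
            · apply biprod.hom_ext' <;>
                simp [Preadditive.sub_comp, Preadditive.comp_sub, hu2', key2]
            · apply biprod.hom_ext' <;>
                simp [Preadditive.sub_comp, Preadditive.comp_sub, hu2', key2]
        exact ⟨Y, hY, asIso (biprod.desc (g ≫ ψ.hom) biprod.inr) ≪≫ ψ.symm, by simp⟩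

/-- The cone of a map between sums of shifts is a sum of shifts. -/
lemma cone_SS (horth : ∀ i : ℤ, i ≠ 0 → ∀ f : M ⟶ M⟦i⟧, f = 0)
    (hend : ∀ f : M ⟶ M, f = 0 ∨ IsIso f)
    {A : D} (hA : SS M A) :
    ∀ (T : Triangle D), T ∈ (distTriang D) → (T.obj₁ ≅ A) → SS M T.obj₂ → SS M T.obj₃ := by
  induction hA with
  | of_isZero Z hZ =>
      intro T hT eA hB
      have h1 : IsZero T.obj₁ := hZ.of_iso eA
      have h2 : IsIso T.mor₂ := (Triangle.isZero₁_iff_isIso₂ T hT).1 h1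
      exact hB.of_iso (asIso T.mor₂).symm
  | cons k Z Y hY e ih =>
      intro T hT eA hB
      obtain ⟨ψZ⟩ := e
      -- transport the triangle so that its first object is literally `M⟦k⟧ ⊞ Y`
      have hT' : Triangle.mk ((eA ≪≫ ψZ).inv ≫ T.mor₁) T.mor₂
          (T.mor₃ ≫ ((eA ≪≫ ψZ).hom)⟦(1 : ℤ)⟧') ∈ distTriang D := by
        apply isomorphic_distinguished _ hT
        exact Triangle.isoMk _ _ (eA ≪≫ ψZ).symm (Iso.refl _) (Iso.refl _)
          (by simp; exact (Category.comp_id _).trans (Category.assoc _ _ _).symm)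
          (by exact (Category.comp_id _).trans (Category.id_comp _).symm)
          (by change (T.mor₃ ≫ (shiftFunctor D 1).map (eA ≪≫ ψZ).hom) ≫
              (shiftFunctor D 1).map (eA ≪≫ ψZ).inv = 𝟙 T.obj₃ ≫ T.mor₃
              simp [← Functor.map_comp])
      rcases split_off horth hend hB k (biprod.inl ≫ (eA ≪≫ ψZ).inv ≫ T.mor₁)
        with h | ⟨B₀, hB₀, φ, hφ⟩
      · -- the component `M⟦k⟧ ⟶ T.obj₂` vanishes
        obtain ⟨C₀, u, v, mem⟩ := distinguished_cocone_triangle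
          (biprod.inr ≫ (eA ≪≫ ψZ).inv ≫ T.mor₁ : Y ⟶ T.obj₂)
        have hC₀ : SS M C₀ := ih (Triangle.mk _ u v) mem (Iso.refl _) hB
        obtain ⟨Ts, hTs, s₁, s₂, s₃, comm⟩ : ∃ (Ts : Triangle D) (_ : Ts ∈ distTriang D)
            (s₁ : Ts.obj₁ ≅ M⟦k⟧ ⊞ Y)
            (s₂ : Ts.obj₂ ≅ (contractibleTriangle (M⟦k⟧)).rotate.obj₂ ⊞ T.obj₂)
            (_ : Ts.obj₃ ≅ (M⟦k⟧)⟦(1 : ℤ)⟧ ⊞ C₀),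
            Ts.mor₁ ≫ s₂.hom = s₁.hom ≫
              biprod.map (0 : M⟦k⟧ ⟶ (contractibleTriangle (M⟦k⟧)).rotate.obj₂)
                (biprod.inr ≫ (eA ≪≫ ψZ).inv ≫ T.mor₁) := exists_sum_triangle
          ((contractibleTriangle (M⟦k⟧)).rotate) (Triangle.mk _ u v)
          (rot_of_distTriang _ (contractible_distinguished _)) mem
        have hz : IsZero ((contractibleTriangle (M⟦k⟧)).rotate.obj₂) := isZero_zero D
        have hm : Ts.mor₁ = s₁.hom ≫
            biprod.map (0 : M⟦k⟧ ⟶ (contractibleTriangle (M⟦k⟧)).rotate.obj₂)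
              (biprod.inr ≫ (eA ≪≫ ψZ).inv ≫ T.mor₁) ≫ s₂.inv := by
          rw [← cancel_mono s₂.hom]
          simpa using comm
        have hsq : ((eA ≪≫ ψZ).inv ≫ T.mor₁) ≫ ((zeroBiprodIso hz).symm ≪≫ s₂.symm).hom =
            (s₁.symm).hom ≫ Ts.mor₁ := by
          rw [hm]
          simp only [Iso.trans_hom, Iso.symm_hom, Iso.inv_hom_id_assoc]
          rw [← cancel_mono s₂.hom]
          simp only [Category.assoc, Iso.inv_hom_id, Category.comp_id]
          apply biprod.hom_ext
          · exact hz.eq_of_tgt _ _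
          · apply biprod.hom_ext'
            · simp only [Iso.trans_inv, Category.assoc] at h ⊢
              simp [h, zeroBiprodIso]
            · simp [zeroBiprodIso]
        obtain ⟨eC⟩ := cone_iso (Triangle.mk ((eA ≪≫ ψZ).inv ≫ T.mor₁) T.mor₂
            (T.mor₃ ≫ ((eA ≪≫ ψZ).hom)⟦(1 : ℤ)⟧')) Ts hT' hTs
          s₁.symm ((zeroBiprodIso hz).symm ≪≫ s₂.symm) hsq
        exact SS.cons (k + 1) _ C₀ hC₀
          ⟨eC ≪≫ s₃ ≪≫
            biprod.mapIso (((shiftFunctorAdd' D k 1 (k + 1) rfl).app M).symm) (Iso.refl _)⟩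
      · -- the component `M⟦k⟧ ⟶ T.obj₂` splits off
        have h1 : biprod.inl ≫ ((eA ≪≫ ψZ).inv ≫ T.mor₁) ≫ φ.inv = biprod.inl := by
          rw [← Category.assoc, ← hφ, Category.assoc, Iso.hom_inv_id, Category.comp_id]
        have h1' := reassoc_of% h1
        have h1b : biprod.inl ≫ ψZ.inv ≫ eA.inv ≫ T.mor₁ ≫ φ.inv = biprod.inl := by
          simpa only [Iso.trans_inv, Category.assoc] using h1
        have h1b' := reassoc_of% h1b
        obtain ⟨C₀, u, v, mem⟩ := distinguished_cocone_triangle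
          (biprod.inr ≫ ((eA ≪≫ ψZ).inv ≫ T.mor₁) ≫ φ.inv ≫ biprod.snd : Y ⟶ B₀)
        have hC₀ : SS M C₀ := ih (Triangle.mk _ u v) mem (Iso.refl _) hB₀
        obtain ⟨Ts, hTs, s₁, s₂, s₃, comm⟩ : ∃ (Ts : Triangle D) (_ : Ts ∈ distTriang D)
            (s₁ : Ts.obj₁ ≅ M⟦k⟧ ⊞ Y) (s₂ : Ts.obj₂ ≅ M⟦k⟧ ⊞ B₀) (_ : Ts.obj₃ ≅ (contractibleTriangle (M⟦k⟧)).obj₃ ⊞ C₀),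
            Ts.mor₁ ≫ s₂.hom = s₁.hom ≫ biprod.map (𝟙 (M⟦k⟧))
              (biprod.inr ≫ ((eA ≪≫ ψZ).inv ≫ T.mor₁) ≫ φ.inv ≫ biprod.snd) := exists_sum_triangle
          (contractibleTriangle (M⟦k⟧)) (Triangle.mk _ u v)
          (contractible_distinguished _) mem
        have hm : Ts.mor₁ = s₁.hom ≫
            biprod.map (𝟙 (M⟦k⟧))
              (biprod.inr ≫ ((eA ≪≫ ψZ).inv ≫ T.mor₁) ≫ φ.inv ≫ biprod.snd) ≫ s₂.inv := by
          rw [← cancel_mono s₂.hom]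
          simpa using comm
        -- the change-of-basis automorphism
        have hα : IsIso (biprod.desc biprod.inl
            (biprod.lift (-(biprod.inr ≫ ((eA ≪≫ ψZ).inv ≫ T.mor₁) ≫ φ.inv ≫ biprod.fst))
              (𝟙 Y)) : M⟦k⟧ ⊞ Y ⟶ M⟦k⟧ ⊞ Y) := by
          refine ⟨⟨biprod.desc biprod.inl
            (biprod.lift (biprod.inr ≫ ((eA ≪≫ ψZ).inv ≫ T.mor₁) ≫ φ.inv ≫ biprod.fst)
              (𝟙 Y)), ?_, ?_⟩⟩
          · apply biprod.hom_ext' <;> apply biprod.hom_ext <;>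
              simp [biprod.lift_eq, Preadditive.add_comp, Preadditive.neg_comp, h1b, h1b']
          · apply biprod.hom_ext' <;> apply biprod.hom_ext <;>
              simp [biprod.lift_eq, Preadditive.add_comp, Preadditive.neg_comp, h1b, h1b']
        haveI := hα
        have hα2 : (biprod.desc biprod.inl
            (biprod.lift (-(biprod.inr ≫ ((eA ≪≫ ψZ).inv ≫ T.mor₁) ≫ φ.inv ≫ biprod.fst))
              (𝟙 Y))) ≫ ((eA ≪≫ ψZ).inv ≫ T.mor₁) ≫ φ.inv =
            biprod.map (𝟙 (M⟦k⟧))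
              (biprod.inr ≫ ((eA ≪≫ ψZ).inv ≫ T.mor₁) ≫ φ.inv ≫ biprod.snd) := by
          apply biprod.hom_ext'
          · rw [biprod.inl_desc_assoc, h1, biprod.inl_map, Category.id_comp]
          · rw [biprod.inr_desc_assoc, biprod.inr_map]
            apply biprod.hom_ext
            · simp [biprod.lift_eq, Preadditive.add_comp, Preadditive.neg_comp,
                Category.assoc, h1b, h1b']
            · simp [biprod.lift_eq, Preadditive.add_comp, Preadditive.neg_comp,
                Category.assoc, h1b, h1b']
        have hsq : ((eA ≪≫ ψZ).inv ≫ T.mor₁) ≫ (φ.symm ≪≫ s₂.symm).hom =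
            ((asIso (biprod.desc biprod.inl
              (biprod.lift
                (-(biprod.inr ≫ ((eA ≪≫ ψZ).inv ≫ T.mor₁) ≫ φ.inv ≫ biprod.fst))
                (𝟙 Y)))).symm ≪≫ s₁.symm).hom ≫ Ts.mor₁ := by
          have hα2' := reassoc_of% hα2
          rw [hm]
          simp only [Iso.trans_hom, Iso.symm_hom, asIso_inv, Category.assoc,
            Iso.inv_hom_id_assoc]
          rw [IsIso.eq_inv_comp]
          rw [hα2']
        obtain ⟨eC⟩ := cone_iso (Triangle.mk ((eA ≪≫ ψZ).inv ≫ T.mor₁) T.mor₂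
            (T.mor₃ ≫ ((eA ≪≫ ψZ).hom)⟦(1 : ℤ)⟧')) Ts hT' hTs
          ((@asIso _ _ _ _ _ hα).symm ≪≫ s₁.symm) (φ.symm ≪≫ s₂.symm) hsq
        exact hC₀.of_iso (eC ≪≫ s₃ ≪≫ zeroBiprodIso (isZero_zero D))

end AddShiftsAux

open AddShiftsAux in
/-- Let `M` be an indecomposable module over a hereditary algebra
with `Ext¹(M,M) = 0`, viewed in `D^b(mod H)`.  The key facts are that
`Hom(M, M[i]) = 0` for `i ≠ 0` and that every endomorphism of `M` is zero or
invertible.  Then `add {M[i] : i ∈ ℤ}` is a thick subcategory of `D^b(mod H)`: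
it contains the zero objects and is closed under shifts, direct summands and
triangles. -/
theorem addShifts_thick (D : Type) [Category D] [Preadditive D]
    [HasZeroObject D] [HasShift D ℤ] [∀ i : ℤ, (shiftFunctor D i).Additive]
    [Pretriangulated D] [HasFiniteBiproducts D] [HasBinaryBiproducts D]
    (M : D) (hM0 : ¬ IsZero M)
    -- `Hom(M, M[i]) = 0` for `i ≠ 0` (from hereditariness and `Ext¹(M,M) = 0`)
    (horth : ∀ i : ℤ, i ≠ 0 → ∀ f : M ⟶ M⟦i⟧, f = 0)
    -- every endomorphism of `M` is zero or an isomorphism (`M` exceptional)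
    (hend : ∀ f : M ⟶ M, f = 0 ∨ IsIso f) :
    (∀ X : D, IsZero X → InAddShifts M X) ∧
    (∀ (X : D) (i : ℤ), InAddShifts M X → InAddShifts M (X⟦i⟧)) ∧
    (∀ X Y : D, InAddShifts M X →
      (∃ (s : Y ⟶ X) (r : X ⟶ Y), s ≫ r = 𝟙 Y) → InAddShifts M Y) ∧
    (∀ Tr : Triangle D, Tr ∈ distinguishedTriangles →
      InAddShifts M Tr.obj₁ → InAddShifts M Tr.obj₂ → InAddShifts M Tr.obj₃) := by
  -- `InAddShifts M X` iff `X ⊞ Y` is `SS` for some `Y`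
  have key : ∀ X : D, (∃ Y : D, SS M (X ⊞ Y)) → InAddShifts M X := by
    rintro X ⟨Y, hXY⟩
    obtain ⟨n, k, ⟨e⟩⟩ := hXY.exists_iso
    exact ⟨n, k, Y, ⟨e⟩⟩
  have key' : ∀ X : D, InAddShifts M X → ∃ Y : D, SS M (X ⊞ Y) := by
    rintro X ⟨n, k, Y, ⟨e⟩⟩
    exact ⟨Y, (SS_finBiproduct n k).of_iso e⟩
  -- retract closure
  have ret : ∀ (W Y : D), SS M W → (∃ (s : Y ⟶ W) (r : W ⟶ Y), s ≫ r = 𝟙 Y) →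
      InAddShifts M Y := by
    rintro W Y hW ⟨s, r, hsr⟩
    obtain ⟨C, ⟨e⟩⟩ := retract_split s r hsr
    exact key Y ⟨C, hW.of_iso e.symm⟩
  refine ⟨?_, ?_, ?_, ?_⟩
  · intro X hX
    exact key X ⟨X, SS.of_isZero _ (hX.of_iso (zeroBiprodIso hX))⟩
  · intro X i hX
    obtain ⟨Y, hXY⟩ := key' X hX
    exact key _ ⟨Y⟦i⟧, (hXY.shift i).of_iso ((shiftFunctor D i).mapBiprod X Y).symm⟩
  · intro X Y hX hret
    obtain ⟨Z, hXZ⟩ := key' X hX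
    obtain ⟨s, r, hsr⟩ := hret
    exact ret (X ⊞ Z) Y hXZ
      ⟨s ≫ biprod.inl, biprod.fst ≫ r, by simp [hsr]⟩
  · intro T hT h₁ h₂
    obtain ⟨Y₁, hY₁⟩ := key' _ h₁
    obtain ⟨Y₂, hY₂⟩ := key' _ h₂
    -- sum up four triangles
    obtain ⟨Ta, hTa, ea₁, ea₂, ea₃, comma⟩ := exists_sum_triangle T
      (contractibleTriangle Y₁) hT (contractible_distinguished Y₁)
    obtain ⟨Tb, hTb, eb₁, eb₂, eb₃, commb⟩ := exists_sum_triangle Ta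
      ((contractibleTriangle Y₂).invRotate) hTa
      (inv_rot_of_distTriang _ (contractible_distinguished Y₂))
    obtain ⟨Tc, hTc, ec₁, ec₂, ec₃, commc⟩ := exists_sum_triangle Tb
      ((contractibleTriangle T.obj₁).invRotate) hTb
      (inv_rot_of_distTriang _ (contractible_distinguished T.obj₁))
    -- Tc.obj₁ ≅ ((T.obj₁ ⊞ Y₁) ⊞ 0⟦-1⟧) ⊞ 0⟦-1⟧ is SS
    have hz2 : IsZero ((contractibleTriangle Y₂).invRotate.obj₁) :=
      (shiftFunctor D (-1 : ℤ)).map_isZero (isZero_zero D)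
    have hz3 : IsZero ((contractibleTriangle T.obj₁).invRotate.obj₁) :=
      (shiftFunctor D (-1 : ℤ)).map_isZero (isZero_zero D)
    have ha1 : SS M Ta.obj₁ := hY₁.of_iso ea₁
    have hb1 : SS M Tb.obj₁ := (ha1.biprod (SS.of_isZero _ hz2)).of_iso eb₁
    have hobj₁ : SS M Tc.obj₁ := (hb1.biprod (SS.of_isZero _ hz3)).of_iso ec₁
    have hobj₂ : SS M Tc.obj₂ := by
      have e : Tc.obj₂ ≅ (T.obj₂ ⊞ Y₂) ⊞ (Y₁ ⊞ T.obj₁) :=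
        ec₂ ≪≫ biprod.mapIso (eb₂ ≪≫ biprod.mapIso ea₂ (Iso.refl _)) (Iso.refl _) ≪≫
          biprod.associator _ _ _ ≪≫ interchangeIso _ _ _ _
      exact (hY₂.biprod (hY₁.of_iso (biprod.braiding _ _))).of_iso e
    have hobj₃ : SS M Tc.obj₃ :=
      cone_SS horth hend (SS.of_iso hobj₁ (Iso.refl _)) Tc hTc (Iso.refl _) hobj₂
    -- T.obj₃ is a retract of Tc.obj₃
    refine ret Tc.obj₃ T.obj₃ hobj₃
      ⟨(biprod.inl ≫ ea₃.inv ≫ biprod.inl ≫ eb₃.inv) ≫ biprod.inl ≫ ec₃.inv,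
       ec₃.hom ≫ biprod.fst ≫ (eb₃.hom ≫ biprod.fst ≫ ea₃.hom ≫ biprod.fst), by simp⟩
end

section
/- Let H be a finite-dimensional hereditary algebra over a field K and let U, V be indecomposable H-modules with Ext^1_H(V, U) = 0. Then any nonzero homomorphism f: U → V is either injective or surjective. -/
set_option maxHeartbeats 1000000

/-- Every submodule of a finite free module over a left hereditary ring is projective. -/
theorem submodule_pi_projective (H : Type) [Ring H]
    (hhered : ∀ I : Submodule H H, Module.Projective H I) :
    ∀ (n : ℕ) (N : Submodule H (Fin n → H)), Module.Projective H N := by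
  intro n
  induction n with
  | zero =>
    intro N
    have : Subsingleton N := ⟨fun a b => Subtype.ext (funext fun i => Fin.elim0 i)⟩
    exact ⟨⟨0, fun x => Subsingleton.elim _ _⟩⟩
  | succ n ih =>
    intro N
    set e : N →ₗ[H] H := (LinearMap.proj (Fin.last n)).comp N.subtype with he
    haveI hI : Module.Projective H (LinearMap.range e) := hhered _
    obtain ⟨s, hs⟩ := Module.projective_lifting_property e.rangeRestrict LinearMap.id
      e.surjective_rangeRestrict
    set N₀ : Submodule H N := LinearMap.ker e with hN₀def
    haveI hN₀ : Module.Projective H N₀ := by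
      set φ : N₀ →ₗ[H] (Fin n → H) :=
        (LinearMap.funLeft H H Fin.castSucc).comp (N.subtype.comp N₀.subtype) with hφdef
      have hφ : Function.Injective φ := by
        intro x y hxy
        apply Subtype.ext; apply Subtype.ext
        funext i
        refine Fin.lastCases ?_ (fun i => ?_) i
        · have hx : e x.1 = 0 := LinearMap.mem_ker.mp x.2
          have hy : e y.1 = 0 := LinearMap.mem_ker.mp y.2
          simp only [he, LinearMap.comp_apply, LinearMap.proj_apply,
            Submodule.subtype_apply] at hx hy
          rw [hx, hy]
        · exact congrFun hxy i
      haveI := ih (LinearMap.range φ)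
      exact Module.Projective.of_equiv (LinearEquiv.ofInjective φ hφ).symm
    have hmem : ∀ x : N, x - s (e.rangeRestrict x) ∈ N₀ := by
      intro x
      rw [hN₀def, LinearMap.mem_ker]
      have h1 : e (s (e.rangeRestrict x)) = e x := by
        have := LinearMap.congr_fun hs (e.rangeRestrict x)
        have h2 := congrArg Subtype.val this
        simpa using h2
      rw [map_sub, h1, sub_self]
    set ι : N →ₗ[H] N₀ × (LinearMap.range e) :=
      LinearMap.prod
        (LinearMap.codRestrict N₀ (LinearMap.id - s ∘ₗ e.rangeRestrict) hmem)
        e.rangeRestrict with hι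
    set σ : N₀ × (LinearMap.range e) →ₗ[H] N := LinearMap.coprod N₀.subtype s with hσ
    refine Module.Projective.of_split ι σ ?_
    ext x
    simp [ι, σ, sub_add_cancel]

/-- Happel–Ringel lemma: Let `H` be a finite-dimensional hereditary
algebra over a field `K` (hereditary: every left ideal is projective), and let
`U`, `V` be indecomposable finite-dimensional `H`-modules with `Ext¹_H(V, U) = 0`
(every short exact sequence `0 → U → E → V → 0` of `H`-modules splits).  Then every
nonzero `H`-homomorphism `f : U → V` is injective or surjective. -/
theorem happel_ringel (K H : Type) [Field K] [Ring H] [Algebra K H]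
    [FiniteDimensional K H]
    (hhered : ∀ I : Submodule H H, Module.Projective H I)
    (U V : Type) [AddCommGroup U] [Module H U] [AddCommGroup V] [Module H V]
    [Module K U] [IsScalarTower K H U] [FiniteDimensional K U]
    [Module K V] [IsScalarTower K H V] [FiniteDimensional K V]
    (hUne : Nontrivial U)
    (hUind : ∀ W W' : Submodule H U, IsCompl W W' → W = ⊥ ∨ W' = ⊥)
    (hVne : Nontrivial V)
    (hVind : ∀ W W' : Submodule H V, IsCompl W W' → W = ⊥ ∨ W' = ⊥)
    (hExt : ∀ (E : Type) [AddCommGroup E] [Module H E] (i : U →ₗ[H] E)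
      (p : E →ₗ[H] V), Function.Injective i → Function.Surjective p →
      LinearMap.range i = LinearMap.ker p →
      ∃ s : V →ₗ[H] E, p ∘ₗ s = LinearMap.id)
    (f : U →ₗ[H] V) (hf : f ≠ 0) :
    Function.Injective f ∨ Function.Surjective f := by
  by_contra hcon
  push_neg at hcon
  obtain ⟨hinj, hsurj⟩ := hcon
  classical
  have hWne : LinearMap.range f ≠ ⊤ := fun h => hsurj (LinearMap.range_eq_top.mp h)
  have hKne : LinearMap.ker f ≠ ⊥ := fun h => hinj (LinearMap.ker_eq_bot.mp h)
  haveI : Module.Finite H V := Module.Finite.of_restrictScalars_finite K H V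
  obtain ⟨n, ρ, hρ⟩ := Module.Finite.exists_fin' H V
  set W : Submodule H V := LinearMap.range f with hWdef
  set Ω : Submodule H (Fin n → H) := Submodule.comap ρ W with hΩdef
  haveI hΩproj : Module.Projective H Ω := submodule_pi_projective H hhered n Ω
  set ρ'' : Ω →ₗ[H] W := LinearMap.codRestrict W (ρ ∘ₗ Ω.subtype) (fun ω => ω.2) with hρ''
  obtain ⟨lam, hlam⟩ := Module.projective_lifting_property f.rangeRestrict ρ''
    f.surjective_rangeRestrict
  have hlam' : ∀ ω : Ω, f (lam ω) = ρ ω := by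
    intro ω
    have h1 := congrArg Subtype.val (LinearMap.congr_fun hlam ω)
    exact h1
  set τ : Ω →ₗ[H] U × (Fin n → H) := LinearMap.prod lam (-Ω.subtype) with hτ
  set T : Submodule H (U × (Fin n → H)) := LinearMap.range τ with hT
  set j : U →ₗ[H] (U × (Fin n → H)) ⧸ T := T.mkQ ∘ₗ LinearMap.inl H U (Fin n → H) with hj
  set G : U × (Fin n → H) →ₗ[H] V :=
    f ∘ₗ LinearMap.fst H U (Fin n → H) + ρ ∘ₗ LinearMap.snd H U (Fin n → H) with hG
  have hTG : T ≤ LinearMap.ker G := by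
    rintro _ ⟨ω, rfl⟩
    simp [G, τ, hlam' ω]
  set g : (U × (Fin n → H)) ⧸ T →ₗ[H] V := T.liftQ G hTG with hgdef
  have hg : ∀ y : U × (Fin n → H), g (T.mkQ y) = f y.1 + ρ y.2 := fun y => rfl
  have hgj : ∀ u : U, g (j u) = f u := by
    intro u
    have := hg (u, 0)
    simpa [j] using this
  have hjinj : Function.Injective j := by
    intro u u' huu
    have huu' : T.mkQ (u, 0) = T.mkQ (u', 0) := huu
    have hmem := (Submodule.Quotient.eq T).mp huu'
    obtain ⟨ω, hω⟩ := hmem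
    have h2 : (τ ω).2 = ((u, 0) - (u', 0) : U × (Fin n → H)).2 := congrArg Prod.snd hω
    have h3 : ω = 0 := by
      have h5 : -(ω : Fin n → H) = 0 := by simpa [τ] using h2
      have h6 : (ω : Fin n → H) = 0 := by simpa using congrArg Neg.neg h5
      exact Subtype.ext h6
    have h4 : (τ ω).1 = ((u, 0) - (u', 0) : U × (Fin n → H)).1 := congrArg Prod.fst hω
    have h7 : lam ω = u - u' := by simpa [τ] using h4
    rw [h3, map_zero] at h7
    exact sub_eq_zero.mp h7.symm
  have hkey : ∀ (u : U) (p : Fin n → H) (hp : p ∈ Ω),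
      T.mkQ (u, p) = j (u + lam ⟨p, hp⟩) := by
    intro u p hp
    have hmem : ((u + lam ⟨p, hp⟩, 0) : U × (Fin n → H)) - (u, p) ∈ T := by
      refine ⟨⟨p, hp⟩, ?_⟩
      have h1 : τ ⟨p, hp⟩ = (lam ⟨p, hp⟩, -p) := rfl
      rw [h1, Prod.mk_sub_mk, Prod.mk.injEq]
      constructor
      · abel
      · abel
    have := (Submodule.Quotient.eq T).mpr hmem
    simpa [j] using this.symm
  have hgsurj : Function.Surjective g := by
    intro v
    obtain ⟨p, rfl⟩ := hρ v
    exact ⟨T.mkQ (0, p), by simpa using hg (0, p)⟩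
  have hkerg : ∀ x : (U × (Fin n → H)) ⧸ T, g x = 0 → ∃ k : U, f k = 0 ∧ j k = x := by
    intro x hx
    obtain ⟨⟨u, p⟩, rfl⟩ := T.mkQ_surjective x
    have h1 : f u + ρ p = 0 := by rw [← hg (u, p)]; exact hx
    have hp : p ∈ Ω := by
      show ρ p ∈ W
      have h2 : ρ p = -f u := eq_neg_of_add_eq_zero_right h1
      rw [h2]
      exact neg_mem (LinearMap.mem_range_self f u)
    refine ⟨u + lam ⟨p, hp⟩, ?_, (hkey u p hp).symm⟩
    rw [map_add, hlam']
    exact h1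
  -- apply the Ext-vanishing hypothesis
  set i' : U →ₗ[H] ((U × (Fin n → H)) ⧸ T) × W := j.prod f.rangeRestrict with hi'def
  set p' : ((U × (Fin n → H)) ⧸ T) × W →ₗ[H] V :=
    g ∘ₗ LinearMap.fst H _ W - W.subtype ∘ₗ LinearMap.snd H _ W with hp'def
  have hi' : Function.Injective i' := fun u u' h => hjinj (congrArg Prod.fst h)
  have hp' : Function.Surjective p' := by
    intro v
    obtain ⟨x, hx⟩ := hgsurj v
    exact ⟨(x, 0), by simp [p', hx]⟩
  have hrk : LinearMap.range i' = LinearMap.ker p' := by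
    apply le_antisymm
    · rintro _ ⟨u, rfl⟩
      simp [p', i', hgj u]
    · rintro ⟨x, w⟩ hxw
      have hgx : g x = ↑w := by
        have : p' (x, w) = 0 := hxw
        simpa [p', sub_eq_zero] using this
      obtain ⟨⟨u, p⟩, rfl⟩ := T.mkQ_surjective x
      have h1 : f u + ρ p = ↑w := by rw [← hg (u, p)]; exact hgx
      have hp : p ∈ Ω := by
        show ρ p ∈ W
        have h2 : ρ p = ↑w - f u := eq_sub_of_add_eq' h1
        rw [h2]
        exact sub_mem w.2 (LinearMap.mem_range_self f u)
      refine ⟨u + lam ⟨p, hp⟩, ?_⟩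
      have hfst : j (u + lam ⟨p, hp⟩) = T.mkQ (u, p) := (hkey u p hp).symm
      have hsnd : f.rangeRestrict (u + lam ⟨p, hp⟩) = w := by
        apply Subtype.ext
        show f (u + lam ⟨p, hp⟩) = ↑w
        rw [map_add, hlam']
        exact h1
      simp [i', hfst, hsnd, Prod.ext_iff]
  obtain ⟨s, hs⟩ := hExt _ i' p' hi' hp' hrk
  set s₁ : V →ₗ[H] (U × (Fin n → H)) ⧸ T := LinearMap.fst H _ W ∘ₗ s with hs₁
  set σ : V →ₗ[H] V := W.subtype ∘ₗ (LinearMap.snd H _ W ∘ₗ s) with hσ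
  have hsv : ∀ v, g (s₁ v) - σ v = v := by
    intro v
    have := LinearMap.congr_fun hs v
    simpa [p', s₁, σ] using this
  -- Fitting: σ is nilpotent
  haveI : IsNoetherian H V := isNoetherian_of_tower K inferInstance
  haveI : IsArtinian H V := isArtinian_of_tower K inferInstance
  have hσW : LinearMap.range σ ≤ W := by
    have h1 := LinearMap.range_comp_le_range (LinearMap.snd H _ W ∘ₗ s) W.subtype
    rw [Submodule.range_subtype] at h1
    exact h1
  obtain ⟨m, hm, hm1⟩ :=
    ((σ.eventually_isCompl_ker_pow_range_pow).and (Filter.eventually_ge_atTop 1)).exists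
  have hnil : IsNilpotent σ := by
    rcases hVind _ _ hm with hk | hr
    · exfalso
      have htop : LinearMap.range (σ ^ m) = ⊤ := by
        have h2 := hm.sup_eq_top
        rwa [hk, bot_sup_eq] at h2
      have hle : LinearMap.range (σ ^ m) ≤ W := by
        obtain ⟨m', rfl⟩ := Nat.exists_eq_add_of_le hm1
        have h3 : σ ^ (1 + m') = σ ∘ₗ σ ^ m' := by
          rw [pow_add, pow_one]
          rfl
        rw [h3]
        exact (LinearMap.range_comp_le_range _ _).trans hσW
      rw [htop] at hle
      exact hWne (top_le_iff.mp hle)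
    · exact ⟨m, LinearMap.range_eq_bot.mp hr⟩
  set θ : V →ₗ[H] V := g ∘ₗ s₁ with hθdef
  have hθeq : θ = 1 + σ := by
    ext v
    simp only [hθdef, LinearMap.comp_apply, LinearMap.add_apply, Module.End.one_apply]
    exact sub_eq_iff_eq_add.mp (hsv v)
  have hθunit : IsUnit θ := by
    rw [hθeq]
    exact hnil.isUnit_one_add
  obtain ⟨uθ, huθ⟩ := hθunit
  set θinv : V →ₗ[H] V := (↑uθ⁻¹ : V →ₗ[H] V) with hθinv
  have hmulinv : θ * θinv = 1 := by rw [← huθ, hθinv]; exact uθ.mul_inv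
  set t : V →ₗ[H] (U × (Fin n → H)) ⧸ T := s₁ ∘ₗ θinv with ht
  have hgt : ∀ v, g (t v) = v := by
    intro v
    have h2 : (θ * θinv) v = (1 : V →ₗ[H] V) v := by rw [hmulinv]
    rwa [Module.End.mul_apply, Module.End.one_apply] at h2
  set W₂ : Submodule H U := Submodule.comap j (LinearMap.range t) with hW₂
  have hcompl : IsCompl (LinearMap.ker f) W₂ := by
    constructor
    · rw [Submodule.disjoint_def]
      intro u hu hu2
      obtain ⟨v, hv⟩ := hu2
      have h1 : v = 0 := by
        have h2 : g (t v) = v := hgt v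
        rw [hv, hgj u, LinearMap.mem_ker.mp hu] at h2
        exact h2.symm
      rw [h1, map_zero] at hv
      have : j u = j 0 := by rw [map_zero]; exact hv.symm
      exact hjinj this
    · rw [codisjoint_iff, Submodule.eq_top_iff']
      intro u
      have hx : g (j u - t (g (j u))) = 0 := by
        rw [map_sub, hgt, sub_self]
      obtain ⟨k, hk0, hkj⟩ := hkerg _ hx
      have hW₂mem : u - k ∈ W₂ := by
        show j (u - k) ∈ LinearMap.range t
        have h1 : j (u - k) = t (g (j u)) := by
          rw [map_sub, hkj]
          abel
        rw [h1]
        exact LinearMap.mem_range_self t _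
      exact Submodule.mem_sup.mpr
        ⟨k, LinearMap.mem_ker.mpr hk0, u - k, hW₂mem, by abel⟩
  rcases hUind _ _ hcompl with h1 | h2
  · exact hKne h1
  · have h3 : LinearMap.ker f = ⊤ := by
      have h4 := hcompl.sup_eq_top
      rwa [h2, sup_bot_eq] at h4
    exact hf (LinearMap.ker_eq_top.mp h3)
end
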